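/- arXiv:1505.05003 — 2 statements merged into one kernel-verified Lean document; each statement's English description precedes it below -/
import Mathlib

section
/- Pinching-based feasibility step: Let x ∈ ℝ^d and let T_x = {xzᵀ + zxᵀ : z ∈ ℝ^d} ⊆ 𝓗_d. If X ⪰ 0 is positive semidefinite with trace(X) = ‖x‖² and Δ := X − xxᵀ, then trace(Δ_{T_x}) + ‖Δ_{T_x^⊥}‖_* ≤ 0, where Δ_{T_x} and Δ_{T_x^⊥} are the orthogonal projections of Δ onto T_x and its orthogonal complement, and ‖·‖_* is the nuclear norm. -/
/-!
Since `Δ₂` is symmetric and orthogonal to `x zᵀ + z xᵀ` for `z = Δ₂ x`, we get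
`2‖Δ₂ x‖² = 0`, so `Δ₂` kills `x`. Compressing by the orthogonal projection `P` onto `xᗮ`,
which annihilates `x xᵀ`, `x zᵀ` and `z xᵀ`, gives `Δ₂ = P Δ₂ P = P X P ⪰ 0`.
Hence `‖Δ₂‖_* = trace Δ₂`, and `trace Δ₁ + trace Δ₂ = trace X - ‖x‖² = 0`.
-/

open Matrix

/-- The nuclear norm of a real square matrix: the sum of its singular values. -/
noncomputable def nuclearNorm {d : ℕ} (A : Matrix (Fin d) (Fin d) ℝ) : ℝ :=
  ∑ i, Real.sqrt ((Matrix.isHermitian_conjTranspose_mul_self A).eigenvalues i)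

namespace Matrix

variable {n : Type*} [Fintype n]

lemma trace_vecMulVec_add_vecMulVec_mul {R : Type*} [CommRing R] {A : Matrix n n R}
    (hA : A.IsSymm) (x z : n → R) :
    ((vecMulVec x z + vecMulVec z x) * A).trace = 2 * (z ⬝ᵥ A *ᵥ x) := by
  rw [add_mul, trace_add, vecMulVec_mul, vecMulVec_mul, trace_vecMulVec, trace_vecMulVec,
    dotProduct_comm, ← dotProduct_mulVec, ← mulVec_transpose, hA.eq, two_mul]

lemma mulVec_eq_zero_of_forall_trace_mul_eq_zero {R : Type*} [CommRing R] [LinearOrder R]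
    [IsStrictOrderedRing R] {A : Matrix n n R} (hA : A.IsSymm) (x : n → R)
    (h : ∀ z, ((vecMulVec x z + vecMulVec z x) * A).trace = 0) : A *ᵥ x = 0 := by
  have := h (A *ᵥ x)
  rw [trace_vecMulVec_add_vecMulVec_mul hA, mul_eq_zero] at this
  exact dotProduct_self_eq_zero.1 (this.resolve_left two_ne_zero)

variable [DecidableEq n]

lemma IsHermitian.trace_cfc_real {A : Matrix n n ℝ} (hA : A.IsHermitian) (f : ℝ → ℝ) :
    (cfc f A).trace = ∑ i, f (hA.eigenvalues i) := by
  rw [hA.cfc_eq, IsHermitian.cfc, Unitary.conjStarAlgAut_apply, trace_mul_cycle,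
    Unitary.coe_star_mul_self, one_mul, trace_diagonal]
  rfl

/-- The orthogonal projection onto `xᗮ`; for `x = 0` the junk value `0⁻¹ = 0` makes it `1`. -/
noncomputable def orthogonalProjection (x : n → ℝ) : Matrix n n ℝ :=
  1 - (x ⬝ᵥ x)⁻¹ • vecMulVec x x

lemma conjTranspose_orthogonalProjection (x : n → ℝ) :
    (orthogonalProjection x)ᴴ = orthogonalProjection x := by
  simp [orthogonalProjection]

lemma orthogonalProjection_mulVec_self (x : n → ℝ) : orthogonalProjection x *ᵥ x = 0 := by
  rcases eq_or_ne (x ⬝ᵥ x) 0 with hx | hx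
  · simp [dotProduct_self_eq_zero.1 hx]
  · rw [orthogonalProjection, sub_mulVec, one_mulVec, smul_mulVec, vecMulVec_mulVec]
    simp [smul_smul, inv_mul_cancel₀ hx]

lemma orthogonalProjection_mul_vecMulVec_self_left (x y : n → ℝ) :
    orthogonalProjection x * vecMulVec x y = 0 := by
  rw [mul_vecMulVec, orthogonalProjection_mulVec_self, zero_vecMulVec]

lemma vecMulVec_self_right_mul_orthogonalProjection (x y : n → ℝ) :
    vecMulVec y x * orthogonalProjection x = 0 := by
  rw [vecMulVec_mul, ← mulVec_transpose, ← conjTranspose_eq_transpose_of_trivial,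
    conjTranspose_orthogonalProjection, orthogonalProjection_mulVec_self, vecMulVec_zero]

lemma mul_orthogonalProjection_of_mulVec_eq_zero {A : Matrix n n ℝ} {x : n → ℝ}
    (hAx : A *ᵥ x = 0) : A * orthogonalProjection x = A := by
  rw [orthogonalProjection, mul_sub, mul_one, Matrix.mul_smul, mul_vecMulVec, hAx, zero_vecMulVec,
    smul_zero, sub_zero]

lemma PosSemidef.sub_vecMulVec_sub_vecMulVec {X : Matrix n n ℝ} (hX : X.PosSemidef)
    {x a b : n → ℝ} (hA : (X - vecMulVec x a - vecMulVec b x).IsHermitian)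
    (hAx : (X - vecMulVec x a - vecMulVec b x) *ᵥ x = 0) :
    (X - vecMulVec x a - vecMulVec b x).PosSemidef := by
  set A := X - vecMulVec x a - vecMulVec b x
  set P := orthogonalProjection x
  have hP : Pᴴ = P := conjTranspose_orthogonalProjection x
  have hAP : A * P = A := mul_orthogonalProjection_of_mulVec_eq_zero hAx
  have hPA : P * A = A := by
    rw [← hA.eq, ← hP, ← conjTranspose_mul, hAP]
  have : A = Pᴴ * X * P := by
    rw [hP]
    calc A = P * A * P := by rw [hPA, hAP]
      _ = P * X * P := by
        simp only [A, P, mul_sub, sub_mul, Matrix.mul_assoc,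
          orthogonalProjection_mul_vecMulVec_self_left,
          vecMulVec_self_right_mul_orthogonalProjection, mul_zero, sub_zero]
  rw [this]
  exact hX.conjTranspose_mul_mul_same P

end Matrix

open scoped MatrixOrder in
lemma nuclearNorm_eq_trace_of_posSemidef {d : ℕ} {A : Matrix (Fin d) (Fin d) ℝ}
    (hA : A.PosSemidef) : nuclearNorm A = A.trace := by
  have hAA : 0 ≤ Aᴴ * A := (posSemidef_conjTranspose_mul_self A).nonneg
  calc nuclearNorm A = (cfc Real.sqrt (Aᴴ * A)).trace :=
        ((isHermitian_conjTranspose_mul_self A).trace_cfc_real _).symm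
    _ = (CFC.sqrt (Aᴴ * A)).trace := by
        rw [CFC.sqrt_eq_real_sqrt _ hAA, cfcₙ_eq_cfc (hf0 := Real.sqrt_zero)]
    _ = A.trace := by rw [hA.isHermitian.eq, CFC.sqrt_mul_self A hA.nonneg]

/-- Pinching-based feasibility step: for `x ∈ ℝ^d`, `T_x = {xzᵀ + zxᵀ : z}`, and `X ⪰ 0` with
`trace X = ‖x‖²`, writing `Δ = X − xxᵀ = Δ₁ + Δ₂` with `Δ₁ ∈ T_x` and `Δ₂ ⊥ T_x`
(so `Δ₁ = Δ_{T_x}` and `Δ₂ = Δ_{T_x^⊥}`), one has `trace(Δ₁) + ‖Δ₂‖_* ≤ 0`. -/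
theorem pinching_feasibility_step
    {d : ℕ} (x : Fin d → ℝ) (X Δ₁ Δ₂ : Matrix (Fin d) (Fin d) ℝ)
    (hX : X.PosSemidef) (htr : X.trace = ∑ i, x i ^ 2)
    (hdecomp : Δ₁ + Δ₂ = X - vecMulVec x x)
    (hΔ₁ : ∃ z : Fin d → ℝ, Δ₁ = vecMulVec x z + vecMulVec z x)
    (hΔ₂ : ∀ z : Fin d → ℝ, ((vecMulVec x z + vecMulVec z x) * Δ₂).trace = 0) :
    Δ₁.trace + nuclearNorm Δ₂ ≤ 0 := by
  obtain ⟨z, rfl⟩ := hΔ₁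
  have hΔ₂_eq : Δ₂ = X - vecMulVec x (x + z) - vecMulVec z x := by
    rw [eq_sub_of_add_eq' hdecomp, vecMulVec_add]; abel
  have hΔ₂_herm : Δ₂.IsHermitian := by
    rw [eq_sub_of_add_eq' hdecomp]
    refine (hX.isHermitian.sub ?_).sub ?_ <;>
      simp [IsHermitian, add_comm]
  have hΔ₂_ker : Δ₂ *ᵥ x = 0 :=
    mulVec_eq_zero_of_forall_trace_mul_eq_zero (isHermitian_iff_isSymm.1 hΔ₂_herm) x hΔ₂
  have hΔ₂_psd : Δ₂.PosSemidef := by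
    rw [hΔ₂_eq] at hΔ₂_herm hΔ₂_ker ⊢
    exact hX.sub_vecMulVec_sub_vecMulVec hΔ₂_herm hΔ₂_ker
  have htrace : (vecMulVec x z + vecMulVec z x).trace + Δ₂.trace = 0 := by
    rw [← trace_add, hdecomp, trace_sub, htr, trace_vecMulVec]
    simp [dotProduct, sq]
  rw [nuclearNorm_eq_trace_of_posSemidef hΔ₂_psd, htrace]
end

section
/- Second-moment operator identity: Let P = O D_λ Oᵀ with O Haar-distributed on O(d), d ≥ 2, s₁ = trace(D_λ), s₂ = trace(D_λ²), and assume 2d s₂ − 2 s₁² ≠ 0. Then with a₁ = d(d+2)(d−1)/(2d s₂ − 2 s₁²) and a₂ = ((d+1)s₁² − 2 s₂)/(2d s₂ − 2 s₁²), one has a₁ · E[⟨P, X⟩ P] = X + a₂ · trace(X) · I_d for every symmetric matrix X. -/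
set_option linter.unusedSectionVars false
open Matrix MeasureTheory

noncomputable instance matrixMeasurableSpace (d : ℕ) :
    MeasurableSpace (Matrix (Fin d) (Fin d) ℝ) :=
  (inferInstance : MeasurableSpace (Fin d → Fin d → ℝ))

instance matrixBorelSpace (d : ℕ) : BorelSpace (Matrix (Fin d) (Fin d) ℝ) :=
  (inferInstance : BorelSpace (Fin d → Fin d → ℝ))

section SMO

variable {Ω : Type*} [MeasurableSpace Ω] (μ : Measure Ω) [IsProbabilityMeasure μ]
variable {d : ℕ} (lam : Fin d → ℝ) (O : Ω → Matrix (Fin d) (Fin d) ℝ)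

/-- The random matrix `P = O D Oᵀ`. -/
noncomputable def smoP (ω : Ω) : Matrix (Fin d) (Fin d) ℝ :=
  O ω * diagonal lam * (O ω)ᵀ

/-- Second moments of entries of `P`. -/
noncomputable def smoM (i j k l : Fin d) : ℝ :=
  ∫ ω, smoP lam O ω i j * smoP lam O ω k l ∂μ

lemma smo_cont : Continuous (fun A : Matrix (Fin d) (Fin d) ℝ =>
    A * diagonal lam * Aᵀ) :=
  (continuous_id.matrix_mul continuous_const).matrix_mul continuous_id.matrix_transpose

lemma smo_entry_cont (i j : Fin d) :
    Continuous (fun A : Matrix (Fin d) (Fin d) ℝ => (A * diagonal lam * Aᵀ) i j) :=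
  (continuous_apply j).comp ((continuous_apply i).comp (smo_cont lam))

lemma smoP_meas (hOmeas : Measurable O) : Measurable (smoP lam O) :=
  (smo_cont lam).measurable.comp hOmeas

lemma smoP_entry_meas (hOmeas : Measurable O) (i j : Fin d) :
    Measurable (fun ω => smoP lam O ω i j) :=
  (smoP_meas lam O hOmeas).eval.eval

lemma smoP_apply (ω : Ω) (i j : Fin d) :
    smoP lam O ω i j = ∑ k, O ω i k * lam k * O ω j k := by
  simp only [smoP, Matrix.mul_apply, Matrix.diagonal_apply, Matrix.transpose_apply,
    ite_mul, zero_mul, mul_ite, mul_zero, Finset.sum_ite_eq, Finset.sum_ite_eq',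
    Finset.mem_univ, if_true]

lemma smoP_symm (ω : Ω) (i j : Fin d) : smoP lam O ω i j = smoP lam O ω j i := by
  simp only [smoP_apply]
  exact Finset.sum_congr rfl fun k _ => by ring

lemma smoO_entry_bound (hOrth : ∀ ω, (O ω)ᵀ * O ω = 1) (ω : Ω) (i j : Fin d) : |O ω i j| ≤ 1 := by
  have h := congrFun (congrFun (hOrth ω) j) j
  simp only [Matrix.mul_apply, Matrix.transpose_apply, Matrix.one_apply_eq] at h
  have h1 : (O ω i j) * (O ω i j) ≤ 1 := by
    have hle : (O ω i j) * (O ω i j) ≤ ∑ k, O ω k j * O ω k j :=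
      Finset.single_le_sum (f := fun k => O ω k j * O ω k j)
        (fun k _ => mul_self_nonneg _) (Finset.mem_univ i)
    linarith [hle, h.le, h.ge]
  exact abs_le_one_iff_mul_self_le_one.mpr h1

lemma smoP_entry_bound (hOrth : ∀ ω, (O ω)ᵀ * O ω = 1) (ω : Ω) (i j : Fin d) :
    |smoP lam O ω i j| ≤ ∑ k, |lam k| := by
  rw [smoP_apply]
  refine (Finset.abs_sum_le_sum_abs _ _).trans (Finset.sum_le_sum fun k _ => ?_)
  have h1 := smoO_entry_bound O hOrth ω i k
  have h2 := smoO_entry_bound O hOrth ω j k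
  rw [abs_mul, abs_mul]
  exact (mul_le_of_le_one_right (mul_nonneg (abs_nonneg _) (abs_nonneg _)) h2).trans
    (mul_le_of_le_one_left (abs_nonneg _) h1)

lemma smoP_pair_integrable (hOmeas : Measurable O) (hOrth : ∀ ω, (O ω)ᵀ * O ω = 1) (i j k l : Fin d) :
    Integrable (fun ω => smoP lam O ω i j * smoP lam O ω k l) μ := by
  set C : ℝ := ∑ k, |lam k| with hC
  refine Integrable.mono' (integrable_const (C * C))
    ((smoP_entry_meas lam O hOmeas i j).mul (smoP_entry_meas lam O hOmeas k l)).aestronglyMeasurable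
    (ae_of_all _ fun ω => ?_)
  rw [Real.norm_eq_abs, abs_mul]
  have hCnn : (0:ℝ) ≤ C := Finset.sum_nonneg fun k _ => abs_nonneg _
  exact mul_le_mul (smoP_entry_bound lam O hOrth ω i j) (smoP_entry_bound lam O hOrth ω k l)
    (abs_nonneg _) hCnn


lemma smo_invariance (hOmeas : Measurable O)
    (hHaar : ∀ Q : Matrix (Fin d) (Fin d) ℝ, Qᵀ * Q = 1 →
      Measure.map (fun ω => Q * O ω) μ = Measure.map O μ)
    (Q : Matrix (Fin d) (Fin d) ℝ) (hQ : Qᵀ * Q = 1)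
    (g : Matrix (Fin d) (Fin d) ℝ → ℝ) (hg : Measurable g) :
    ∫ ω, g (Q * smoP lam O ω * Qᵀ) ∂μ = ∫ ω, g (smoP lam O ω) ∂μ := by
  have key : ∀ ω, Q * smoP lam O ω * Qᵀ = (Q * O ω) * diagonal lam * (Q * O ω)ᵀ := by
    intro ω
    simp only [smoP, Matrix.transpose_mul, Matrix.mul_assoc]
  set f : Matrix (Fin d) (Fin d) ℝ → ℝ := fun A => g (A * diagonal lam * Aᵀ) with hf
  have hfmeas : Measurable f := hg.comp (smo_cont lam).measurable
  have hQO : Measurable (fun ω => Q * O ω) :=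
    (continuous_const.matrix_mul continuous_id).measurable.comp hOmeas
  calc ∫ ω, g (Q * smoP lam O ω * Qᵀ) ∂μ = ∫ ω, f (Q * O ω) ∂μ := by
        simp only [hf, key]
    _ = ∫ A, f A ∂(Measure.map (fun ω => Q * O ω) μ) :=
        (integral_map hQO.aemeasurable hfmeas.aestronglyMeasurable).symm
    _ = ∫ A, f A ∂(Measure.map O μ) := by rw [hHaar Q hQ]
    _ = ∫ ω, f (O ω) ∂μ := integral_map hOmeas.aemeasurable hfmeas.aestronglyMeasurable
    _ = ∫ ω, g (smoP lam O ω) ∂μ := rfl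

lemma smoM_conj (hOmeas : Measurable O)
    (hHaar : ∀ Q : Matrix (Fin d) (Fin d) ℝ, Qᵀ * Q = 1 →
      Measure.map (fun ω => Q * O ω) μ = Measure.map O μ)
    (Q : Matrix (Fin d) (Fin d) ℝ) (hQ : Qᵀ * Q = 1) (i j k l : Fin d) :
    ∫ ω, (Q * smoP lam O ω * Qᵀ) i j * (Q * smoP lam O ω * Qᵀ) k l ∂μ
      = smoM μ lam O i j k l := by
  have hg : Measurable (fun A : Matrix (Fin d) (Fin d) ℝ => A i j * A k l) := by
    have h1 : Measurable (fun A : Matrix (Fin d) (Fin d) ℝ => A i j) :=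
      (measurable_pi_apply i).eval
    have h2 : Measurable (fun A : Matrix (Fin d) (Fin d) ℝ => A k l) :=
      (measurable_pi_apply k).eval
    exact h1.mul h2
  exact smo_invariance μ lam O hOmeas hHaar Q hQ _ hg


lemma smoM_sign (hOmeas : Measurable O)
    (hHaar : ∀ Q : Matrix (Fin d) (Fin d) ℝ, Qᵀ * Q = 1 →
      Measure.map (fun ω => Q * O ω) μ = Measure.map O μ)
    (ε : Fin d → ℝ) (hε : ∀ m, ε m = 1 ∨ ε m = -1) (i j k l : Fin d) :
    ε i * ε j * ε k * ε l * smoM μ lam O i j k l = smoM μ lam O i j k l := by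
  set Q : Matrix (Fin d) (Fin d) ℝ := diagonal ε with hQdef
  have hQ : Qᵀ * Q = 1 := by
    rw [hQdef, Matrix.diagonal_transpose, Matrix.diagonal_mul_diagonal]
    have hee : (fun x => ε x * ε x) = fun _ => (1:ℝ) :=
      funext fun x => by rcases hε x with h | h <;> rw [h] <;> norm_num
    rw [hee, Matrix.diagonal_one]
  have key : ∀ ω (a b : Fin d), (Q * smoP lam O ω * Qᵀ) a b = ε a * smoP lam O ω a b * ε b := by
    intro ω a b
    rw [hQdef, Matrix.diagonal_transpose, Matrix.mul_diagonal, Matrix.diagonal_mul]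
  have h := smoM_conj μ lam O hOmeas hHaar Q hQ i j k l
  calc ε i * ε j * ε k * ε l * smoM μ lam O i j k l
      = ∫ ω, ε i * ε j * ε k * ε l * (smoP lam O ω i j * smoP lam O ω k l) ∂μ := by
        rw [smoM, ← integral_const_mul]
    _ = ∫ ω, (Q * smoP lam O ω * Qᵀ) i j * (Q * smoP lam O ω * Qᵀ) k l ∂μ := by
        refine integral_congr_ae (ae_of_all _ fun ω => ?_)
        simp only [key]; ring
    _ = smoM μ lam O i j k l := h

lemma smoM_vanish (hOmeas : Measurable O)
    (hHaar : ∀ Q : Matrix (Fin d) (Fin d) ℝ, Qᵀ * Q = 1 →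
      Measure.map (fun ω => Q * O ω) μ = Measure.map O μ)
    (i j k l m : Fin d)
    (h : ((if i = m then (-1:ℝ) else 1) * (if j = m then (-1:ℝ) else 1) *
          (if k = m then (-1:ℝ) else 1) * (if l = m then (-1:ℝ) else 1)) = -1) :
    smoM μ lam O i j k l = 0 := by
  have hs := smoM_sign μ lam O hOmeas hHaar (fun x => if x = m then (-1:ℝ) else 1)
    (fun x => by by_cases hx : x = m <;> simp [hx]) i j k l
  rw [h] at hs
  linarith

lemma smoM_perm (hOmeas : Measurable O)
    (hHaar : ∀ Q : Matrix (Fin d) (Fin d) ℝ, Qᵀ * Q = 1 →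
      Measure.map (fun ω => Q * O ω) μ = Measure.map O μ)
    (σ : Equiv.Perm (Fin d)) (i j k l : Fin d) :
    smoM μ lam O (σ i) (σ j) (σ k) (σ l) = smoM μ lam O i j k l := by
  set Q : Matrix (Fin d) (Fin d) ℝ := fun a b => if a = σ b then 1 else 0 with hQdef
  have hQ : Qᵀ * Q = 1 := by
    ext a b
    simp only [Matrix.mul_apply, Matrix.transpose_apply]
    simp only [hQdef, ite_mul, one_mul, zero_mul,
      Finset.sum_ite_eq', Finset.mem_univ, if_true, Matrix.one_apply,
      EmbeddingLike.apply_eq_iff_eq]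
  have key : ∀ (A : Matrix (Fin d) (Fin d) ℝ) (a b : Fin d),
      (Q * A * Qᵀ) (σ a) (σ b) = A a b := by
    intro A a b
    simp only [Matrix.mul_apply, Matrix.transpose_apply]
    simp only [hQdef,
      EmbeddingLike.apply_eq_iff_eq, ite_mul, mul_ite, one_mul, mul_one, zero_mul, mul_zero,
      Finset.sum_ite_eq, Finset.sum_ite_eq', Finset.mem_univ, if_true]
  have h := smoM_conj μ lam O hOmeas hHaar Q hQ (σ i) (σ j) (σ k) (σ l)
  calc smoM μ lam O (σ i) (σ j) (σ k) (σ l)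
      = ∫ ω, (Q * smoP lam O ω * Qᵀ) (σ i) (σ j) * (Q * smoP lam O ω * Qᵀ) (σ k) (σ l) ∂μ :=
        h.symm
    _ = ∫ ω, smoP lam O ω i j * smoP lam O ω k l ∂μ := by
        refine integral_congr_ae (ae_of_all _ fun ω => ?_)
        simp only [key]
    _ = smoM μ lam O i j k l := rfl


lemma smo_sum_split_pair {d : ℕ} (p q : Fin d) (hpq : p ≠ q) (F : Fin d → ℝ) :
    ∑ x, F x = F p + F q + ∑ x ∈ Finset.univ \ {p, q}, F x := by
  rw [← Finset.sum_sdiff (Finset.subset_univ ({p, q} : Finset (Fin d))), Finset.sum_pair hpq]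
  ring

lemma smoM_rot (hOmeas : Measurable O) (hOrth : ∀ ω, (O ω)ᵀ * O ω = 1)
    (hHaar : ∀ Q : Matrix (Fin d) (Fin d) ℝ, Qᵀ * Q = 1 →
      Measure.map (fun ω => Q * O ω) μ = Measure.map O μ)
    (p q : Fin d) (hpq : p ≠ q) :
    smoM μ lam O p p p p = smoM μ lam O p p q q + 2 * smoM μ lam O p q p q := by
  set c : ℝ := Real.sqrt 2 / 2 with hcdef
  have hc2 : c * c = 1 / 2 := by
    rw [hcdef, div_mul_div_comm, Real.mul_self_sqrt (by norm_num : (0:ℝ) ≤ 2)]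
    norm_num
  set Q : Matrix (Fin d) (Fin d) ℝ := fun a b =>
    if a = p then (if b = p then c else if b = q then c else 0)
    else if a = q then (if b = p then c else if b = q then -c else 0)
    else if a = b then 1 else 0 with hQdef
  have hQpp : Q p p = c := by simp [hQdef]
  have hQpq : Q p q = c := by simp [hQdef, hpq]
  have hQqp : Q q p = c := by simp [hQdef, hpq.symm]
  have hQqq : Q q q = -c := by simp [hQdef, hpq.symm]
  have hQrow : ∀ a b, a ≠ p → a ≠ q → Q a b = if a = b then 1 else 0 := by
    intro a b ha hb; simp [hQdef, ha, hb]
  have hQcol0 : ∀ a b, b ≠ p → b ≠ q → a ≠ b → Q a b = 0 := by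
    intro a b hbp hbq hab
    by_cases hap : a = p
    · simp [hQdef, hap, hbp, hbq]
    · by_cases haq : a = q
      · simp [hQdef, hap, haq, hbp, hbq]
      · simp [hQdef, hap, haq, hab]
  have hQ : Qᵀ * Q = 1 := by
    ext a b
    rw [Matrix.mul_apply]
    simp only [Matrix.transpose_apply]
    rw [smo_sum_split_pair p q hpq (fun x => Q x a * Q x b)]
    have tail : ∑ x ∈ Finset.univ \ ({p, q} : Finset (Fin d)), Q x a * Q x b
        = if a = b ∧ a ≠ p ∧ a ≠ q then 1 else 0 := by
      by_cases hab : a = b ∧ a ≠ p ∧ a ≠ q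
      · obtain ⟨hab1, hap, haq⟩ := hab
        subst hab1
        rw [if_pos ⟨rfl, hap, haq⟩, Finset.sum_eq_single_of_mem a]
        · rw [hQrow a a hap haq]; simp
        · simp [Finset.mem_sdiff, hap, haq]
        · intro x hx hxa
          simp only [Finset.mem_sdiff, Finset.mem_insert, Finset.mem_singleton,
            Finset.mem_univ, true_and, not_or] at hx
          rw [hQrow x a hx.1 hx.2]
          simp [hxa]
      · rw [if_neg hab]
        refine Finset.sum_eq_zero fun x hx => ?_
        simp only [Finset.mem_sdiff, Finset.mem_insert, Finset.mem_singleton,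
          Finset.mem_univ, true_and, not_or] at hx
        rw [hQrow x a hx.1 hx.2, hQrow x b hx.1 hx.2]
        by_cases hxa : x = a
        · by_cases hxb : x = b
          · exfalso; subst hxa; exact hab ⟨hxb, hx.1, hx.2⟩
          · simp [hxb]
        · simp [hxa]
    rw [tail]
    beta_reduce
    by_cases hap : a = p
    · rw [hap]
      by_cases hbp : b = p
      · rw [hbp, hQpp, hQqp, Matrix.one_apply_eq]
        have : ¬ (p = p ∧ p ≠ p ∧ p ≠ q) := by simp
        rw [if_neg this]
        linarith [hc2]
      · by_cases hbq : b = q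
        · rw [hbq, hQpp, hQpq, hQqp, hQqq, Matrix.one_apply_ne hpq]
          have : ¬ (p = q ∧ p ≠ p ∧ p ≠ q) := by simp [hpq]
          rw [if_neg this]
          ring
        · have hpb : ¬ (p = b) := fun h => hbp h.symm
          rw [hQcol0 p b hbp hbq hpb, hQcol0 q b hbp hbq (fun h => hbq h.symm),
            Matrix.one_apply_ne hpb]
          have : ¬ (p = b ∧ p ≠ p ∧ p ≠ q) := by simp [hpb]
          rw [if_neg this]
          ring
    · by_cases haq : a = q
      · rw [haq]
        have hqp : ¬ (q = p) := fun h => hpq h.symm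
        by_cases hbp : b = p
        · rw [hbp, hQpq, hQpp, hQqq, hQqp, Matrix.one_apply_ne (Ne.symm hpq)]
          have : ¬ (q = p ∧ q ≠ p ∧ q ≠ q) := by simp [hqp]
          rw [if_neg this]
          ring
        · by_cases hbq : b = q
          · rw [hbq, hQpq, hQqq, Matrix.one_apply_eq]
            have : ¬ (q = q ∧ q ≠ p ∧ q ≠ q) := by simp
            rw [if_neg this]
            nlinarith [hc2]
          · have hqb : ¬ (q = b) := fun h => hbq h.symm
            rw [hQcol0 p b hbp hbq (fun h => hbp h.symm), hQcol0 q b hbp hbq hqb,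
              Matrix.one_apply_ne hqb]
            have : ¬ (q = b ∧ q ≠ p ∧ q ≠ q) := by simp [hqb]
            rw [if_neg this]
            ring
      · rw [hQcol0 p a hap haq (fun h => hap h.symm),
          hQcol0 q a hap haq (fun h => haq h.symm)]
        simp only [zero_mul, zero_add]
        by_cases hab : a = b
        · rw [if_pos ⟨hab, hap, haq⟩, hab, Matrix.one_apply_eq]
        · rw [if_neg (fun h => hab h.1), Matrix.one_apply_ne hab]
  have keyrow : ∀ (A : Matrix (Fin d) (Fin d) ℝ) (x : Fin d),
      (Q * A) p x = c * A p x + c * A q x := by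
    intro A x
    rw [Matrix.mul_apply]
    rw [smo_sum_split_pair p q hpq (fun y => Q p y * A y x)]
    have tail0 : ∑ y ∈ Finset.univ \ ({p, q} : Finset (Fin d)), Q p y * A y x = 0 := by
      refine Finset.sum_eq_zero fun y hy => ?_
      simp only [Finset.mem_sdiff, Finset.mem_insert, Finset.mem_singleton,
        Finset.mem_univ, true_and, not_or] at hy
      rw [hQcol0 p y hy.1 hy.2 (fun h => hy.1 h.symm)]
      ring
    rw [tail0, hQpp, hQpq]
    ring
  have key : ∀ A : Matrix (Fin d) (Fin d) ℝ,
      (Q * A * Qᵀ) p p = c * (c * A p p + c * A q p) + c * (c * A p q + c * A q q) := by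
    intro A
    rw [Matrix.mul_apply]
    rw [smo_sum_split_pair p q hpq (fun x => (Q * A) p x * Qᵀ x p)]
    have tail0 : ∑ x ∈ Finset.univ \ ({p, q} : Finset (Fin d)),
        (Q * A) p x * Qᵀ x p = 0 := by
      refine Finset.sum_eq_zero fun x hx => ?_
      simp only [Finset.mem_sdiff, Finset.mem_insert, Finset.mem_singleton,
        Finset.mem_univ, true_and, not_or] at hx
      rw [Matrix.transpose_apply, hQcol0 p x hx.1 hx.2 (fun h => hx.1 h.symm)]
      ring
    rw [tail0, Matrix.transpose_apply, Matrix.transpose_apply, hQpp, hQpq,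
      keyrow A p, keyrow A q]
    ring
  -- pointwise expansion of the squared (p,p) entry
  have expand : ∀ ω, (Q * smoP lam O ω * Qᵀ) p p * (Q * smoP lam O ω * Qᵀ) p p
      = (1/4) * (smoP lam O ω p p * smoP lam O ω p p)
        + (1/4) * (smoP lam O ω q q * smoP lam O ω q q)
        + (smoP lam O ω p q * smoP lam O ω p q)
        + (1/2) * (smoP lam O ω p p * smoP lam O ω q q)
        + (smoP lam O ω p p * smoP lam O ω p q)
        + (smoP lam O ω q q * smoP lam O ω p q) := by
    intro ω
    rw [key, show smoP lam O ω q p = smoP lam O ω p q from smoP_symm lam O ω q p]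
    have e : c * (c * smoP lam O ω p p + c * smoP lam O ω p q)
        + c * (c * smoP lam O ω p q + c * smoP lam O ω q q)
        = (1/2) * (smoP lam O ω p p + 2 * smoP lam O ω p q + smoP lam O ω q q) := by
      have : c * c * (smoP lam O ω p p + 2 * smoP lam O ω p q + smoP lam O ω q q)
          = (1/2) * (smoP lam O ω p p + 2 * smoP lam O ω p q + smoP lam O ω q q) := by
        rw [hc2]
      linarith [this]
    rw [e]
    ring
  have i1 : Integrable (fun ω => (1/4) * (smoP lam O ω p p * smoP lam O ω p p)) μ :=
    (smoP_pair_integrable μ lam O hOmeas hOrth p p p p).const_mul _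
  have i2 : Integrable (fun ω => (1/4) * (smoP lam O ω q q * smoP lam O ω q q)) μ :=
    (smoP_pair_integrable μ lam O hOmeas hOrth q q q q).const_mul _
  have i3 : Integrable (fun ω => smoP lam O ω p q * smoP lam O ω p q) μ :=
    smoP_pair_integrable μ lam O hOmeas hOrth p q p q
  have i4 : Integrable (fun ω => (1/2) * (smoP lam O ω p p * smoP lam O ω q q)) μ :=
    (smoP_pair_integrable μ lam O hOmeas hOrth p p q q).const_mul _
  have i5 : Integrable (fun ω => smoP lam O ω p p * smoP lam O ω p q) μ :=
    smoP_pair_integrable μ lam O hOmeas hOrth p p p q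
  have i6 : Integrable (fun ω => smoP lam O ω q q * smoP lam O ω p q) μ :=
    smoP_pair_integrable μ lam O hOmeas hOrth q q p q
  have hmain : smoM μ lam O p p p p
      = (1/4) * smoM μ lam O p p p p + (1/4) * smoM μ lam O q q q q
        + smoM μ lam O p q p q + (1/2) * smoM μ lam O p p q q
        + smoM μ lam O p p p q + smoM μ lam O q q p q := by
    calc smoM μ lam O p p p p
        = ∫ ω, (Q * smoP lam O ω * Qᵀ) p p * (Q * smoP lam O ω * Qᵀ) p p ∂μ :=
          (smoM_conj μ lam O hOmeas hHaar Q hQ p p p p).symm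
      _ = ∫ ω, ((1/4) * (smoP lam O ω p p * smoP lam O ω p p)
            + (1/4) * (smoP lam O ω q q * smoP lam O ω q q)
            + (smoP lam O ω p q * smoP lam O ω p q)
            + (1/2) * (smoP lam O ω p p * smoP lam O ω q q)
            + (smoP lam O ω p p * smoP lam O ω p q)
            + (smoP lam O ω q q * smoP lam O ω p q)) ∂μ := by
          exact integral_congr_ae (ae_of_all _ fun ω => expand ω)
      _ = (1/4) * smoM μ lam O p p p p + (1/4) * smoM μ lam O q q q q
            + smoM μ lam O p q p q + (1/2) * smoM μ lam O p p q q
            + smoM μ lam O p p p q + smoM μ lam O q q p q := by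
          have I12 : Integrable (fun ω => (1/4) * (smoP lam O ω p p * smoP lam O ω p p)
              + (1/4) * (smoP lam O ω q q * smoP lam O ω q q)) μ := i1.add i2
          have I123 : Integrable (fun ω => (1/4) * (smoP lam O ω p p * smoP lam O ω p p)
              + (1/4) * (smoP lam O ω q q * smoP lam O ω q q)
              + (smoP lam O ω p q * smoP lam O ω p q)) μ := I12.add i3
          have I1234 : Integrable (fun ω => (1/4) * (smoP lam O ω p p * smoP lam O ω p p)
              + (1/4) * (smoP lam O ω q q * smoP lam O ω q q)
              + (smoP lam O ω p q * smoP lam O ω p q)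
              + (1/2) * (smoP lam O ω p p * smoP lam O ω q q)) μ := I123.add i4
          have I12345 : Integrable (fun ω => (1/4) * (smoP lam O ω p p * smoP lam O ω p p)
              + (1/4) * (smoP lam O ω q q * smoP lam O ω q q)
              + (smoP lam O ω p q * smoP lam O ω p q)
              + (1/2) * (smoP lam O ω p p * smoP lam O ω q q)
              + (smoP lam O ω p p * smoP lam O ω p q)) μ := I1234.add i5
          rw [integral_add I12345 i6]
          beta_reduce
          rw [integral_add I1234 i5]
          beta_reduce
          rw [integral_add I123 i4]
          beta_reduce
          rw [integral_add I12 i3]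
          beta_reduce
          rw [integral_add i1 i2]
          beta_reduce
          rw [integral_const_mul, integral_const_mul, integral_const_mul]
          rfl
  have hqqqq : smoM μ lam O q q q q = smoM μ lam O p p p p := by
    have := smoM_perm μ lam O hOmeas hHaar (Equiv.swap p q) p p p p
    simpa [Equiv.swap_apply_left] using this
  have hz1 : smoM μ lam O p p p q = 0 := by
    refine smoM_vanish μ lam O hOmeas hHaar p p p q q ?_
    simp [hpq]
  have hz2 : smoM μ lam O q q p q = 0 := by
    refine smoM_vanish μ lam O hOmeas hHaar q q p q p ?_
    simp [hpq, hpq.symm]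
  rw [hqqqq, hz1, hz2] at hmain
  linarith


lemma smoP_trace (hOrth : ∀ ω, (O ω)ᵀ * O ω = 1) (ω : Ω) :
    (smoP lam O ω).trace = (diagonal lam).trace := by
  rw [smoP, Matrix.trace_mul_cycle, hOrth ω, Matrix.one_mul]

lemma smoP_sq_trace (hOrth : ∀ ω, (O ω)ᵀ * O ω = 1) (ω : Ω) :
    (smoP lam O ω * smoP lam O ω).trace = (diagonal lam * diagonal lam).trace := by
  have h : smoP lam O ω * smoP lam O ω
      = O ω * (diagonal lam * diagonal lam) * (O ω)ᵀ := by
    rw [smoP]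
    calc O ω * diagonal lam * (O ω)ᵀ * (O ω * diagonal lam * (O ω)ᵀ)
        = O ω * diagonal lam * ((O ω)ᵀ * O ω * (diagonal lam * (O ω)ᵀ)) := by
          simp only [Matrix.mul_assoc]
      _ = O ω * (diagonal lam * diagonal lam) * (O ω)ᵀ := by
          rw [hOrth ω, Matrix.one_mul]; simp only [Matrix.mul_assoc]
  rw [h, Matrix.trace_mul_cycle, hOrth ω, Matrix.one_mul]

lemma smo_sum1 (hOmeas : Measurable O) (hOrth : ∀ ω, (O ω)ᵀ * O ω = 1) :
    ∑ i, ∑ j, smoM μ lam O i i j j = ((diagonal lam).trace) ^ 2 := by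
  have key : ∀ ω, ∑ i, ∑ j, smoP lam O ω i i * smoP lam O ω j j
      = ((diagonal lam).trace) ^ 2 := by
    intro ω
    rw [← Fintype.sum_mul_sum]
    have ht : ∑ i, smoP lam O ω i i = (diagonal lam).trace := by
      rw [← smoP_trace lam O hOrth ω]
      simp [Matrix.trace, Matrix.diag]
    rw [ht]; ring
  have step : ∑ i, ∑ j, smoM μ lam O i i j j
      = ∫ ω, ∑ i, ∑ j, smoP lam O ω i i * smoP lam O ω j j ∂μ := by
    rw [integral_finset_sum _ (fun i _ => integrable_finset_sum _
      (fun j _ => smoP_pair_integrable μ lam O hOmeas hOrth i i j j))]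
    refine Finset.sum_congr rfl fun i _ => ?_
    rw [integral_finset_sum _ (fun j _ => smoP_pair_integrable μ lam O hOmeas hOrth i i j j)]
    rfl
  rw [step, integral_congr_ae (ae_of_all _ key), integral_const]
  simp

lemma smo_sum2 (hOmeas : Measurable O) (hOrth : ∀ ω, (O ω)ᵀ * O ω = 1) :
    ∑ i, ∑ j, smoM μ lam O i j j i = (diagonal lam * diagonal lam).trace := by
  have key : ∀ ω, ∑ i, ∑ j, smoP lam O ω i j * smoP lam O ω j i
      = (diagonal lam * diagonal lam).trace := by
    intro ω
    rw [← smoP_sq_trace lam O hOrth ω]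
    simp [Matrix.trace, Matrix.diag, Matrix.mul_apply]
  have step : ∑ i, ∑ j, smoM μ lam O i j j i
      = ∫ ω, ∑ i, ∑ j, smoP lam O ω i j * smoP lam O ω j i ∂μ := by
    rw [integral_finset_sum _ (fun i _ => integrable_finset_sum _
      (fun j _ => smoP_pair_integrable μ lam O hOmeas hOrth i j j i))]
    refine Finset.sum_congr rfl fun i _ => ?_
    rw [integral_finset_sum _ (fun j _ => smoP_pair_integrable μ lam O hOmeas hOrth i j j i)]
    rfl
  rw [step, integral_congr_ae (ae_of_all _ key), integral_const]
  simp

lemma smoM_symm_right (i j k l : Fin d) :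
    smoM μ lam O i j k l = smoM μ lam O i j l k := by
  unfold smoM
  congr 1
  funext ω
  rw [smoP_symm lam O ω k l]

lemma smo_exists_perm {d : ℕ} (p q i j : Fin d) (hpq : p ≠ q) (hij : i ≠ j) :
    ∃ σ : Equiv.Perm (Fin d), σ p = i ∧ σ q = j := by
  set σ₁ := Equiv.swap p i with hσ₁
  have h1 : σ₁ p = i := Equiv.swap_apply_left p i
  have hq1 : σ₁ q ≠ i := by
    intro h
    rw [← h1] at h
    exact hpq (σ₁.injective h).symm
  refine ⟨σ₁.trans (Equiv.swap (σ₁ q) j), ?_, ?_⟩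
  · simp only [Equiv.trans_apply, h1]
    exact Equiv.swap_apply_of_ne_of_ne hq1.symm hij
  · simp only [Equiv.trans_apply]
    exact Equiv.swap_apply_left _ _

end SMO

/-- Second-moment operator identity: for `P = O D_λ Oᵀ` with `O` Haar-distributed on `O(d)`,
`d ≥ 2`, `s₁ = trace(D_λ)`, `s₂ = trace(D_λ²)` and `2d s₂ − 2s₁² ≠ 0`, with
`a₁ = d(d+2)(d−1)/(2d s₂ − 2s₁²)` and `a₂ = ((d+1)s₁² − 2s₂)/(2d s₂ − 2s₁²)`, one has
`a₁ · E[⟨P,X⟩ P] = X + a₂ · trace(X) · I_d` (entrywise) for every symmetric `X`. -/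
theorem second_moment_operator_identity
    {Ω : Type*} [MeasurableSpace Ω] (μ : Measure Ω) [IsProbabilityMeasure μ]
    {d : ℕ} (hd : 2 ≤ d) (lam : Fin d → ℝ)
    (O : Ω → Matrix (Fin d) (Fin d) ℝ) (hOmeas : Measurable O)
    (hOrth : ∀ ω, (O ω)ᵀ * O ω = 1)
    (hHaar : ∀ Q : Matrix (Fin d) (Fin d) ℝ, Qᵀ * Q = 1 →
      Measure.map (fun ω => Q * O ω) μ = Measure.map O μ)
    (s₁ s₂ a₁ a₂ : ℝ)
    (hs₁ : s₁ = (diagonal lam).trace) (hs₂ : s₂ = (diagonal lam * diagonal lam).trace)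
    (hne : 2 * (d : ℝ) * s₂ - 2 * s₁ ^ 2 ≠ 0)
    (ha₁ : a₁ = (d : ℝ) * ((d : ℝ) + 2) * ((d : ℝ) - 1) / (2 * (d : ℝ) * s₂ - 2 * s₁ ^ 2))
    (ha₂ : a₂ = (((d : ℝ) + 1) * s₁ ^ 2 - 2 * s₂) / (2 * (d : ℝ) * s₂ - 2 * s₁ ^ 2))
    (X : Matrix (Fin d) (Fin d) ℝ) (hX : X.IsSymm) :
    ∀ i j : Fin d,
      a₁ * ∫ ω, ((O ω * diagonal lam * (O ω)ᵀ) * X).trace *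
          (O ω * diagonal lam * (O ω)ᵀ) i j ∂μ =
        (X + (a₂ * X.trace) • (1 : Matrix (Fin d) (Fin d) ℝ)) i j := by
  intro i j
  have hdR : (2:ℝ) ≤ (d:ℝ) := by exact_mod_cast hd
  set dR : ℝ := (d : ℝ) with hdRdef
  -- two distinct indices
  set p : Fin d := ⟨0, by omega⟩ with hpdef
  set q : Fin d := ⟨1, by omega⟩ with hqdef
  have hpq : p ≠ q := by
    intro h
    have := congrArg Fin.val h
    simp [hpdef, hqdef] at this
  -- moment constants
  set A : ℝ := smoM μ lam O p p q q with hAdef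
  set B : ℝ := smoM μ lam O p q p q with hBdef
  set C : ℝ := smoM μ lam O p p p p with hCdef
  have hCeq : ∀ m : Fin d, smoM μ lam O m m m m = C := by
    intro m
    have h := smoM_perm μ lam O hOmeas hHaar (Equiv.swap p m) p p p p
    rw [Equiv.swap_apply_left] at h
    exact h
  have hAeq : ∀ m n : Fin d, m ≠ n → smoM μ lam O m m n n = A := by
    intro m n hmn
    obtain ⟨σ, hσp, hσq⟩ := smo_exists_perm p q m n hpq hmn
    have h := smoM_perm μ lam O hOmeas hHaar σ p p q q
    rw [hσp, hσq] at h
    exact h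
  have hBeq : ∀ m n : Fin d, m ≠ n → smoM μ lam O m n m n = B := by
    intro m n hmn
    obtain ⟨σ, hσp, hσq⟩ := smo_exists_perm p q m n hpq hmn
    have h := smoM_perm μ lam O hOmeas hHaar σ p q p q
    rw [hσp, hσq] at h
    exact h
  have e3 : C = A + 2 * B := smoM_rot μ lam O hOmeas hOrth hHaar p q hpq
  -- the two deterministic sum identities
  have e1 : dR * (dR * A + (C - A)) = s₁ ^ 2 := by
    have h1 := smo_sum1 μ lam O hOmeas hOrth
    have hform : ∀ m n : Fin d, smoM μ lam O m m n n = if m = n then C else A := by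
      intro m n
      by_cases h : m = n
      · rw [h, if_pos rfl, hCeq]
      · rw [if_neg h, hAeq m n h]
    have inner : ∀ m : Fin d, ∑ n, smoM μ lam O m m n n = dR * A + (C - A) := by
      intro m
      rw [Finset.sum_congr rfl fun n _ => hform m n]
      have : ∀ n : Fin d, (if m = n then C else A) = A + (if m = n then C - A else 0) := by
        intro n; by_cases h : m = n <;> simp [h]
      rw [Finset.sum_congr rfl fun n _ => this n, Finset.sum_add_distrib,
        Finset.sum_const, Finset.sum_ite_eq, if_pos (Finset.mem_univ m),
        Finset.card_univ, Fintype.card_fin]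
      push_cast
      ring
    rw [Finset.sum_congr rfl fun m _ => inner m, Finset.sum_const, Finset.card_univ,
      Fintype.card_fin, nsmul_eq_mul] at h1
    rw [hs₁]
    exact_mod_cast h1
  have e2 : dR * (dR * B + (C - B)) = s₂ := by
    have h1 := smo_sum2 μ lam O hOmeas hOrth
    have hform : ∀ m n : Fin d, smoM μ lam O m n n m = if m = n then C else B := by
      intro m n
      by_cases h : m = n
      · rw [h, if_pos rfl, hCeq]
      · rw [if_neg h, smoM_symm_right, hBeq m n h]
    have inner : ∀ m : Fin d, ∑ n, smoM μ lam O m n n m = dR * B + (C - B) := by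
      intro m
      rw [Finset.sum_congr rfl fun n _ => hform m n]
      have : ∀ n : Fin d, (if m = n then C else B) = B + (if m = n then C - B else 0) := by
        intro n; by_cases h : m = n <;> simp [h]
      rw [Finset.sum_congr rfl fun n _ => this n, Finset.sum_add_distrib,
        Finset.sum_const, Finset.sum_ite_eq, if_pos (Finset.mem_univ m),
        Finset.card_univ, Fintype.card_fin]
      push_cast
      ring
    rw [Finset.sum_congr rfl fun m _ => inner m, Finset.sum_const, Finset.card_univ,
      Fintype.card_fin, nsmul_eq_mul] at h1
    rw [hs₂]
    exact_mod_cast h1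
  -- solve the linear system
  have f1 : dR ^ 2 * A + 2 * dR * B = s₁ ^ 2 := by linear_combination e1 - dR * e3
  have f2 : dR ^ 2 * B + dR * A + dR * B = s₂ := by linear_combination e2 - dR * e3
  have hB2 : 2 * B * (dR * (dR + 2) * (dR - 1)) = 2 * dR * s₂ - 2 * s₁ ^ 2 := by
    linear_combination 2 * dR * f2 - 2 * f1
  have hA2 : A * (dR * (dR + 2) * (dR - 1)) = (dR + 1) * s₁ ^ 2 - 2 * s₂ := by
    linear_combination (dR + 1) * f1 - 2 * f2
  have haB : a₁ * (2 * B) = 1 := by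
    rw [ha₁, div_mul_eq_mul_div, div_eq_one_iff_eq hne]
    linear_combination hB2
  have haA : a₁ * A = a₂ := by
    rw [ha₁, ha₂, div_mul_eq_mul_div, div_eq_div_iff hne hne]
    linear_combination (2 * dR * s₂ - 2 * s₁ ^ 2) * hA2
  -- structure of the second moments
  have hvan := smoM_vanish μ lam O hOmeas hHaar
  have hform : ∀ k l : Fin d, smoM μ lam O k l i j
      = (if k = l then (if i = j then A else 0) else 0)
      + (if l = j then (if k = i then B else 0) else 0)
      + (if l = i then (if k = j then B else 0) else 0) := by
    intro k l
    by_cases h1 : k = l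
    · subst h1
      by_cases h2 : i = j
      · subst h2
        by_cases h3 : k = i
        · subst h3
          rw [hCeq k, e3]
          simp
          ring
        · rw [hAeq k i h3]
          simp [h3]
      · have hji : ¬ (j = i) := fun h => h2 h.symm
        have hz : smoM μ lam O k k i j = 0 := by
          refine hvan k k i j i ?_
          by_cases h3 : k = i <;> simp [h3, hji]
        rw [hz]
        by_cases h3 : k = i <;> by_cases h4 : k = j <;>
          simp [h2, h3, h4, hji]
    · by_cases h3 : k = i
      · by_cases h4 : l = j
        · subst h3; subst h4
          rw [hBeq k l h1]
          have h5 : ¬ (l = k) := fun h => h1 h.symm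
          simp [h1, h5]
        · have hjl : ¬ (j = l) := fun h => h4 h.symm
          have hkl : ¬ (l = k) := fun h => h1 h.symm
          have hz : smoM μ lam O k l i j = 0 := by
            refine hvan k l i j l ?_
            subst h3
            simp [fun h : k = l => h1 h, h4, hjl, hkl]
          rw [hz]
          have h5 : ¬ (l = i) := by
            subst h3
            exact fun h => h1 h.symm
          simp [h1, h4, h5]
      · by_cases h4 : l = i
        · by_cases h5 : k = j
          · subst h4; subst h5
            rw [smoM_symm_right, hBeq k l h1]
            have h6 : ¬ (l = k) := fun h => h1 h.symm
            simp [h1, h6]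
          · have hlk : ¬ (l = k) := fun h => h1 h.symm
            have hik : ¬ (i = k) := fun h => h3 h.symm
            have hjk : ¬ (j = k) := fun h => h5 h.symm
            have hz : smoM μ lam O k l i j = 0 := by
              refine hvan k l i j k ?_
              simp [hlk, hik, hjk]
            rw [hz]
            simp [h1, h3, h5, h4]
        · have hz : smoM μ lam O k l i j = 0 := by
            by_cases h6 : j = i
            · have hlk : ¬ (l = k) := fun h => h1 h.symm
              have hik : ¬ (i = k) := fun h => h3 h.symm
              have hjk : ¬ (j = k) := fun h => hik (h6.symm.trans h)
              refine hvan k l i j k ?_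
              simp [hlk, hik, hjk]
            · refine hvan k l i j i ?_
              simp [h3, h4, h6]
          rw [hz]
          simp [h1, h3, h4]
  -- expand the trace integral into second moments
  have keysum : ∫ ω, (smoP lam O ω * X).trace * smoP lam O ω i j ∂μ
      = ∑ k, ∑ l, X l k * smoM μ lam O k l i j := by
    have exp1 : ∀ ω, (smoP lam O ω * X).trace * smoP lam O ω i j
        = ∑ k, ∑ l, X l k * (smoP lam O ω k l * smoP lam O ω i j) := by
      intro ω
      have ht : (smoP lam O ω * X).trace = ∑ k, ∑ l, smoP lam O ω k l * X l k := by
        simp [Matrix.trace, Matrix.diag, Matrix.mul_apply]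
      rw [ht, Finset.sum_mul]
      refine Finset.sum_congr rfl fun k _ => ?_
      rw [Finset.sum_mul]
      refine Finset.sum_congr rfl fun l _ => ?_
      ring
    rw [integral_congr_ae (ae_of_all _ exp1),
      integral_finset_sum _ (fun k _ => integrable_finset_sum _ (fun l _ =>
        (smoP_pair_integrable μ lam O hOmeas hOrth k l i j).const_mul _))]
    refine Finset.sum_congr rfl fun k _ => ?_
    rw [integral_finset_sum _ (fun l _ =>
      (smoP_pair_integrable μ lam O hOmeas hOrth k l i j).const_mul _)]
    refine Finset.sum_congr rfl fun l _ => ?_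
    rw [integral_const_mul]
    rfl
  -- evaluate the double sum
  have hsum : ∑ k, ∑ l, X l k * smoM μ lam O k l i j
      = X.trace * (if i = j then A else 0) + X j i * B + X i j * B := by
    rw [Finset.sum_congr rfl fun k _ => Finset.sum_congr rfl fun l _ => by rw [hform k l]]
    have htr : X.trace = ∑ k, X k k := by simp [Matrix.trace, Matrix.diag]
    rw [htr]
    simp_rw [mul_add, Finset.sum_add_distrib, mul_ite, mul_zero, Finset.sum_ite_eq,
      Finset.sum_ite_eq', Finset.mem_univ, if_true]
    rw [Finset.sum_ite_eq' Finset.univ i (fun x => X j x * B),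
        Finset.sum_ite_eq' Finset.univ j (fun x => X i x * B)]
    simp only [Finset.mem_univ, if_true]
    by_cases hij : i = j
    · simp [hij, Finset.sum_mul]
    · simp [hij]
  -- symmetry of X
  have hXs : X j i = X i j := congrFun (congrFun hX i) j
  -- put everything together
  have goalshow : (∫ ω, ((O ω * diagonal lam * (O ω)ᵀ) * X).trace *
      (O ω * diagonal lam * (O ω)ᵀ) i j ∂μ)
      = ∫ ω, (smoP lam O ω * X).trace * smoP lam O ω i j ∂μ := rfl
  rw [goalshow, keysum, hsum, Matrix.add_apply, Matrix.smul_apply, Matrix.one_apply,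
    smul_eq_mul]
  by_cases hij : i = j
  · subst hij
    rw [if_pos rfl, if_pos rfl]
    linear_combination X.trace * haA + X i i * haB
  · rw [if_neg hij, if_neg hij]
    linear_combination X i j * haB + B * hXs * a₁
end
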